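/- arXiv:2103.03646 — 5 statements merged into one kernel-verified Lean document; each statement's English description precedes it below -/
import Mathlib

section
/- Let (a(t), b(t)) be a pair of formal Laurent series over an algebraically closed field L of characteristic zero with a(0) = y₀ ∈ L, ord_t(a(t) − y₀) = k > 0, ord_t(b(t)) = r ≥ 0, and suppose k − r = n for a positive integer n. Then there exist exactly n formal power series s(t) ∈ L[[t]] of order one satisfying the associated differential equation a'(s(t))·s'(t) = n·t^{n−1}·b(s(t)). -/
/-!
Write `k = n + r` and let `c = s'(0)`. The coefficient of `t ^ (k - 1)` in the defect
`a'(s) s' - n t ^ (n - 1) b(s)` is `c ^ r (k a_k c ^ n - n b_r)`, so the linear coefficient of a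
solution is one of the `n` distinct roots of `k a_k c ^ n = n b_r`. Once `c` is such a root, the
coefficient of `t ^ (k - 1 + m)` in the defect depends on `s` only through `s_1, …, s_(m+1)`, and
affinely on `s_(m+1)` with slope `k a_k c ^ (k - 1) (n + m) ≠ 0`. Hence the remaining coefficients
of a solution are determined one at a time, and every root carries exactly one solution.
-/
noncomputable section

variable {L : Type*} [Field L]

/-- composition of formal power series, meaningful when the constant
coefficient of `s` is zero (then `coeff n (s ^ k) = 0` for `k > n`, so the sum
below is the full sum `Σ_k f_k · coeff_n(s^k)`). -/
def pscomp (f s : PowerSeries L) : PowerSeries L :=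
  PowerSeries.mk fun n => ∑ k ∈ Finset.range (n + 1),
    PowerSeries.coeff k f * PowerSeries.coeff n (s ^ k)

open PowerSeries Finset

section LeadingTerms

-- `x ^ (i + 1) ∣ P - a * x ^ i` says that `P` is `a * x ^ i` up to terms of higher order in `x`.

variable {R : Type*} [CommRing R] {x P Q a b : R} {i j N : ℕ}

theorem pow_dvd_of_pow_succ_dvd_sub_mul_pow (h : x ^ (i + 1) ∣ P - a * x ^ i) : x ^ i ∣ P := by
  simpa using ((pow_dvd_pow x i.le_succ).trans h).add (dvd_mul_left (x ^ i) a)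

theorem pow_succ_dvd_add_sub_mul_pow (hP : x ^ (i + 1) ∣ P - a * x ^ i)
    (hQ : x ^ (i + 1) ∣ Q - b * x ^ i) : x ^ (i + 1) ∣ P + Q - (a + b) * x ^ i := by
  convert dvd_add hP hQ using 1
  ring

theorem pow_succ_dvd_sub_sub_mul_pow (hP : x ^ (i + 1) ∣ P - a * x ^ i)
    (hQ : x ^ (i + 1) ∣ Q - b * x ^ i) : x ^ (i + 1) ∣ P - Q - (a - b) * x ^ i := by
  convert dvd_sub hP hQ using 1
  ring

theorem pow_succ_dvd_mul_sub_mul_pow (hP : x ^ (i + 1) ∣ P - a * x ^ i)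
    (hQ : x ^ (j + 1) ∣ Q - b * x ^ j) (hN : i + j = N) :
    x ^ (N + 1) ∣ P * Q - a * b * x ^ N := by
  subst hN
  rw [show P * Q - a * b * x ^ (i + j) = (P - a * x ^ i) * Q + a * x ^ i * (Q - b * x ^ j) by ring]
  refine dvd_add ?_ ?_
  · rw [show i + j + 1 = i + 1 + j by omega, pow_add]
    exact mul_dvd_mul hP (pow_dvd_of_pow_succ_dvd_sub_mul_pow hQ)
  · rw [show i + j + 1 = i + (j + 1) by omega, pow_add]
    exact mul_dvd_mul (dvd_mul_left _ _) hQ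

theorem pow_succ_dvd_mul_left_sub_mul_pow (h : x ^ (i + 1) ∣ P - a * x ^ i) (b : R) :
    x ^ (i + 1) ∣ b * P - b * a * x ^ i := by
  simpa only [mul_sub, mul_assoc] using dvd_mul_of_dvd_right h b

theorem pow_succ_dvd_pow_sub_pow_mul_pow (h : x ^ (i + 1) ∣ P - a * x ^ i) (j : ℕ) :
    x ^ (i * j + 1) ∣ P ^ j - a ^ j * x ^ (i * j) := by
  induction j with
  | zero => simp
  | succ j ih =>
    simpa only [pow_succ] using pow_succ_dvd_mul_sub_mul_pow ih h (Nat.mul_succ i j).symm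

theorem pow_succ_dvd_sum_sub_sum_mul_pow {ι : Type*} (t : Finset ι) {F c : ι → R}
    (h : ∀ k ∈ t, x ^ (i + 1) ∣ F k - c k * x ^ i) :
    x ^ (i + 1) ∣ ∑ k ∈ t, F k - (∑ k ∈ t, c k) * x ^ i := by
  rw [sum_mul, ← sum_sub_distrib]
  exact dvd_sum h

theorem pow_succ_dvd_pow_sub_pow_sub_mul_pow {s u c Δ : R} {m : ℕ} (hs : x ^ 2 ∣ s - c * x)
    (hu : x ^ 2 ∣ u - c * x) (hsu : x ^ (m + 2) ∣ s - u - Δ * x ^ (m + 1)) (j : ℕ) :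
    x ^ (m + j + 1) ∣ s ^ j - u ^ j - j * c ^ (j - 1) * Δ * x ^ (m + j) := by
  rcases j with _ | j
  · simp
  have hs' : x ^ (1 + 1) ∣ s - c * x ^ 1 := by simpa using hs
  have hu' : x ^ (1 + 1) ∣ u - c * x ^ 1 := by simpa using hu
  have hterm : ∀ i ∈ range (j + 1),
      x ^ (j + 1) ∣ s ^ i * u ^ (j + 1 - 1 - i) - c ^ j * x ^ j := by
    intro i hi
    have hij : i + (j - i) = j := by simp at hi; omega
    simpa [← pow_add, hij] using pow_succ_dvd_mul_sub_mul_pow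
      (pow_succ_dvd_pow_sub_pow_mul_pow hs' i) (pow_succ_dvd_pow_sub_pow_mul_pow hu' (j - i))
      (by simp [hij])
  have hsum := pow_succ_dvd_sum_sub_sum_mul_pow _ hterm
  rw [sum_const, card_range, nsmul_eq_mul] at hsum
  have := pow_succ_dvd_mul_sub_mul_pow hsum hsu (N := m + (j + 1)) (by omega)
  rw [geom_sum₂_mul] at this
  convert this using 2
  push_cast
  ring

end LeadingTerms

section XAdic

variable {R : Type*} [CommRing R]

theorem X_pow_succ_dvd_sub_C_mul_X_pow_iff {P : R⟦X⟧} {a : R} {N : ℕ} :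
    X ^ (N + 1) ∣ P - C a * X ^ N ↔ (∀ i < N, coeff i P = 0) ∧ coeff N P = a := by
  simp only [X_pow_dvd_iff, Nat.forall_lt_succ_right, map_sub, coeff_C_mul_X_pow, sub_eq_zero]
  refine and_congr (forall₂_congr fun i hi => ?_) (by simp)
  rw [if_neg hi.ne]

theorem X_pow_succ_dvd_sub_coeff_mul_X_pow {P : R⟦X⟧} {N : ℕ} (h : X ^ N ∣ P) :
    X ^ (N + 1) ∣ P - C (coeff N P) * X ^ N :=
  X_pow_succ_dvd_sub_C_mul_X_pow_iff.2 ⟨X_pow_dvd_iff.1 h, rfl⟩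

theorem X_pow_succ_dvd_derivative_sub {P : R⟦X⟧} {c : R} {j : ℕ}
    (h : X ^ (j + 2) ∣ P - C c * X ^ (j + 1)) :
    X ^ (j + 1) ∣ d⁄dX R P - C ((j + 1) * c) * X ^ j := by
  rw [X_pow_succ_dvd_sub_C_mul_X_pow_iff] at h ⊢
  refine ⟨fun i hi => ?_, ?_⟩
  · rw [coeff_derivative, h.1 (i + 1) (by omega), zero_mul]
  · rw [coeff_derivative, h.2, mul_comm]

theorem X_dvd_derivative_sub {s : R⟦X⟧} {c : R} (hs : X ^ 2 ∣ s - C c * X) :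
    X ^ (0 + 1) ∣ d⁄dX R s - C c * X ^ 0 := by
  have h := X_pow_succ_dvd_derivative_sub (j := 0) (P := s) (c := c) (by simpa using hs)
  simpa using h

theorem X_sq_dvd_sub_C_mul_X_iff {s : R⟦X⟧} {c : R} :
    X ^ 2 ∣ s - C c * X ↔ constantCoeff s = 0 ∧ coeff 1 s = c := by
  simpa using X_pow_succ_dvd_sub_C_mul_X_pow_iff (P := s) (a := c) (N := 1)

theorem coeff_pow_eq_zero_of_lt {s : R⟦X⟧} (hs : constantCoeff s = 0) {d j : ℕ} (h : d < j) :
    coeff d (s ^ j) = 0 :=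
  X_pow_dvd_iff.1 (pow_dvd_pow_of_dvd (X_dvd_iff.2 hs) j) d h

end XAdic

section Composition

theorem X_pow_succ_dvd_pscomp_sub_sum (f : L⟦X⟧) {s : L⟦X⟧} (hs : constantCoeff s = 0) (N : ℕ) :
    X ^ (N + 1) ∣ pscomp f s - ∑ j ∈ range (N + 1), C (coeff j f) * s ^ j := by
  refine X_pow_dvd_iff.2 fun d hd => ?_
  simp only [pscomp, map_sub, coeff_mk, map_sum, coeff_C_mul, sub_eq_zero]
  refine sum_subset (range_subset_range.2 (by omega)) fun j _ hjd => ?_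
  rw [coeff_pow_eq_zero_of_lt hs (by simpa using hjd), mul_zero]

variable {f s u : L⟦X⟧} {c Δ : L} {ℓ m : ℕ}

theorem X_pow_succ_dvd_pscomp_sub (hf : X ^ ℓ ∣ f) (hs : X ^ 2 ∣ s - C c * X) :
    X ^ (ℓ + 1) ∣ pscomp f s - C (coeff ℓ f * c ^ ℓ) * X ^ ℓ := by
  have hs' : X ^ (1 + 1) ∣ s - C c * X ^ 1 := by simpa using hs
  have hterm : ∀ j ∈ range (ℓ + 1), X ^ (ℓ + 1) ∣
      C (coeff j f) * s ^ j - (if j = ℓ then C (coeff ℓ f * c ^ ℓ) else 0) * X ^ ℓ := by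
    intro j hj
    split_ifs with hjℓ
    · subst hjℓ
      simpa [mul_assoc] using
        pow_succ_dvd_mul_left_sub_mul_pow (pow_succ_dvd_pow_sub_pow_mul_pow hs' j) (C (coeff j f))
    · rw [X_pow_dvd_iff.1 hf j (by simp at hj; omega)]
      simp
  have hsum := pow_succ_dvd_sum_sub_sum_mul_pow _ hterm
  rw [sum_ite_eq', if_pos (self_mem_range_succ ℓ)] at hsum
  simpa using (X_pow_succ_dvd_pscomp_sub_sum f ((X_sq_dvd_sub_C_mul_X_iff.1 hs).1) ℓ).add hsum

theorem X_pow_succ_dvd_pscomp_sub_pscomp (hf : X ^ ℓ ∣ f) (hs : X ^ 2 ∣ s - C c * X)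
    (hu : X ^ 2 ∣ u - C c * X) (hsu : X ^ (m + 2) ∣ s - u - C Δ * X ^ (m + 1)) :
    X ^ (m + ℓ + 1) ∣
      pscomp f s - pscomp f u - C (coeff ℓ f * (ℓ * c ^ (ℓ - 1) * Δ)) * X ^ (m + ℓ) := by
  have hterm : ∀ j ∈ range (m + ℓ + 1), X ^ (m + ℓ + 1) ∣ C (coeff j f) * (s ^ j - u ^ j) -
      (if j = ℓ then C (coeff ℓ f * (ℓ * c ^ (ℓ - 1) * Δ)) else 0) * X ^ (m + ℓ) := by
    intro j hj
    have hD := pow_succ_dvd_pow_sub_pow_sub_mul_pow hs hu hsu j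
    rcases lt_trichotomy j ℓ with hj | rfl | hj
    · rw [X_pow_dvd_iff.1 hf j hj, if_neg hj.ne]
      simp
    · simpa [mul_assoc] using pow_succ_dvd_mul_left_sub_mul_pow hD (C (coeff j f))
    · rw [if_neg hj.ne', zero_mul, sub_zero]
      exact dvd_mul_of_dvd_right ((pow_dvd_pow X (show m + ℓ + 1 ≤ m + j by omega)).trans
        (pow_dvd_of_pow_succ_dvd_sub_mul_pow hD)) _
  have hsum := pow_succ_dvd_sum_sub_sum_mul_pow _ hterm
  rw [sum_ite_eq', if_pos (by simp)] at hsum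
  have hs0 := (X_sq_dvd_sub_C_mul_X_iff.1 hs).1
  have hu0 := (X_sq_dvd_sub_C_mul_X_iff.1 hu).1
  convert ((X_pow_succ_dvd_pscomp_sub_sum f hs0 _).sub
    (X_pow_succ_dvd_pscomp_sub_sum f hu0 _)).add hsum using 1
  simp only [mul_sub, sum_sub_distrib]
  ring

theorem X_pow_succ_dvd_pscomp_mul_derivative_sub (hf : X ^ ℓ ∣ f) (hs : X ^ 2 ∣ s - C c * X)
    (hu : X ^ 2 ∣ u - C c * X) (hsu : X ^ (m + 2) ∣ s - u - C Δ * X ^ (m + 1)) :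
    X ^ (ℓ + m + 1) ∣ pscomp f s * d⁄dX L s - pscomp f u * d⁄dX L u -
      C (coeff ℓ f * c ^ ℓ * (ℓ + m + 1) * Δ) * X ^ (ℓ + m) := by
  have hdsu : X ^ (m + 1) ∣ d⁄dX L s - d⁄dX L u - C ((m + 1) * Δ) * X ^ m := by
    simpa using X_pow_succ_dvd_derivative_sub (P := s - u) hsu
  have h := pow_succ_dvd_add_sub_mul_pow
    (pow_succ_dvd_mul_sub_mul_pow (X_pow_succ_dvd_pscomp_sub_pscomp hf hs hu hsu)
      (X_dvd_derivative_sub hs) (N := ℓ + m) (by omega))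
    (pow_succ_dvd_mul_sub_mul_pow (X_pow_succ_dvd_pscomp_sub hf hu) hdsu rfl)
  convert h using 2
  · ring
  · rcases ℓ with _ | ℓ
    · simp
      ring
    · simp only [map_mul, map_add, map_pow, map_natCast, map_one, Nat.add_sub_cancel]
      push_cast
      ring

end Composition

section Triangular

def IsTriangularAt (F : L⟦X⟧ → L⟦X⟧) (p : L⟦X⟧) (e : ℕ) (slope : ℕ → L) : Prop :=
  ∀ s u Δ m, X ^ 2 ∣ s - p → X ^ 2 ∣ u - p → X ^ (m + 2) ∣ s - u - C Δ * X ^ (m + 1) →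
    X ^ (e + m + 1) ∣ F s - F u - C (slope m * Δ) * X ^ (e + m)

-- The correction in degree `m + 2` kills the coefficient of `X ^ (e + m + 1)` in `F`.
def triangularApprox (F : L⟦X⟧ → L⟦X⟧) (p : L⟦X⟧) (e : ℕ) (slope : ℕ → L) : ℕ → L⟦X⟧
  | 0 => p
  | m + 1 => triangularApprox F p e slope m +
      C (-coeff (e + m + 1) (F (triangularApprox F p e slope m)) / slope (m + 1)) * X ^ (m + 2)

variable {F : L⟦X⟧ → L⟦X⟧} {p : L⟦X⟧} {e : ℕ} {slope : ℕ → L}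

theorem X_pow_dvd_triangularApprox_sub {i j : ℕ} (h : i ≤ j) :
    X ^ (i + 2) ∣ triangularApprox F p e slope j - triangularApprox F p e slope i := by
  induction j, h using Nat.le_induction with
  | base => simp
  | succ j hij ih =>
    rw [triangularApprox, add_sub_right_comm]
    exact ih.add (dvd_mul_of_dvd_right (pow_dvd_pow X (by omega)) _)

theorem X_sq_dvd_triangularApprox_sub (m : ℕ) : X ^ 2 ∣ triangularApprox F p e slope m - p :=
  X_pow_dvd_triangularApprox_sub (Nat.zero_le m)

theorem IsTriangularAt.X_pow_dvd_triangularApprox (hF : IsTriangularAt F p e slope)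
    (hslope : ∀ m, slope m ≠ 0) (hp : X ^ (e + 1) ∣ F p) (m : ℕ) :
    X ^ (e + m + 1) ∣ F (triangularApprox F p e slope m) := by
  induction m with
  | zero => simpa [triangularApprox] using hp
  | succ m ih =>
    have h := hF (triangularApprox F p e slope (m + 1)) (triangularApprox F p e slope m)
      (-coeff (e + m + 1) (F (triangularApprox F p e slope m)) / slope (m + 1)) (m + 1)
      (X_sq_dvd_triangularApprox_sub (m + 1)) (X_sq_dvd_triangularApprox_sub m)
      (by simp [triangularApprox])
    rw [mul_div_cancel₀ _ (hslope (m + 1)), ← add_assoc] at h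
    rw [← add_assoc]
    simpa using h.add (X_pow_succ_dvd_sub_coeff_mul_X_pow ih)

theorem IsTriangularAt.exists_eq_zero (hF : IsTriangularAt F p e slope)
    (hslope : ∀ m, slope m ≠ 0) (hp : X ^ (e + 1) ∣ F p) : ∃ s, X ^ 2 ∣ s - p ∧ F s = 0 := by
  set s := PowerSeries.mk fun i => coeff i (triangularApprox F p e slope i)
  have hs : ∀ m, X ^ (m + 2) ∣ s - triangularApprox F p e slope m := fun m => by
    refine X_pow_dvd_iff.2 fun d hd => ?_
    rw [map_sub, coeff_mk, sub_eq_zero]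
    rcases le_or_gt d m with h | h
    · exact (sub_eq_zero.1 (X_pow_dvd_iff.1 (X_pow_dvd_triangularApprox_sub h) d (by omega))).symm
    · obtain rfl : d = m + 1 := by omega
      exact sub_eq_zero.1 (X_pow_dvd_iff.1 (X_pow_dvd_triangularApprox_sub m.le_succ) _ (by omega))
  have hsp : X ^ 2 ∣ s - p := hs 0
  refine ⟨s, hsp, ext fun d => ?_⟩
  have h := hF _ _ 0 d hsp (X_sq_dvd_triangularApprox_sub d) (by simpa using hs d)
  rw [mul_zero, map_zero, zero_mul, sub_zero] at h
  simpa using X_pow_dvd_iff.1 (h.add (hF.X_pow_dvd_triangularApprox hslope hp d)) d (by omega)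

theorem IsTriangularAt.eq_of_eq_zero (hF : IsTriangularAt F p e slope)
    (hslope : ∀ m, slope m ≠ 0) {s u : L⟦X⟧} (hs : X ^ 2 ∣ s - p) (hu : X ^ 2 ∣ u - p)
    (hFs : F s = 0) (hFu : F u = 0) : s = u := by
  by_contra hne
  have hsu : s - u ≠ 0 := sub_ne_zero.2 hne
  have hN : 2 ≤ (s - u).order.toNat := by
    by_contra! h
    refine coeff_order hsu (X_pow_dvd_iff.1 ?_ _ h)
    simpa using hs.sub hu
  obtain ⟨m, hm⟩ : ∃ m, (s - u).order.toNat = m + 1 := ⟨_, (Nat.sub_add_cancel (by omega)).symm⟩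
  have hlead := X_pow_succ_dvd_sub_coeff_mul_X_pow (hm ▸ X_pow_order_dvd (φ := s - u))
  have h := X_pow_dvd_iff.1 (hF s u _ m hs hu hlead) (e + m) (by omega)
  rw [hFs, hFu] at h
  simp only [sub_self, zero_sub, map_neg, coeff_C_mul_X_pow, neg_eq_zero] at h
  exact coeff_order hsu (hm ▸ (mul_eq_zero.1 h).resolve_left (hslope m))

theorem IsTriangularAt.existsUnique_eq_zero (hF : IsTriangularAt F p e slope)
    (hslope : ∀ m, slope m ≠ 0) (hp : X ^ (e + 1) ∣ F p) : ∃! s, X ^ 2 ∣ s - p ∧ F s = 0 :=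
  let ⟨s, hs⟩ := hF.exists_eq_zero hslope hp
  ⟨s, hs, fun _ hu => hF.eq_of_eq_zero hslope hu.1 hs.1 hu.2 hs.2⟩

end Triangular

theorem ncard_setOf_pow_eq {K : Type*} [Field K] [IsAlgClosed K] {n : ℕ} (hn : (n : K) ≠ 0)
    {a : K} (ha : a ≠ 0) : {x : K | x ^ n = a}.ncard = n := by
  have hn0 : 0 < n := Nat.pos_of_ne_zero (by rintro rfl; simp at hn)
  have hroots : {x : K | x ^ n = a} = (Polynomial.X ^ n - Polynomial.C a).rootSet K := by
    ext x
    simp [Polynomial.mem_rootSet, Polynomial.X_pow_sub_C_ne_zero hn0, sub_eq_zero]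
  rw [hroots, Set.ncard_eq_toFinset_card', Set.toFinset_card,
    Polynomial.card_rootSet_eq_natDegree (Polynomial.separable_X_pow_sub_C a hn ha)
      (IsAlgClosed.splits _), Polynomial.natDegree_X_pow_sub_C]

def associatedDefect (f b : L⟦X⟧) (n : ℕ) (s : L⟦X⟧) : L⟦X⟧ :=
  pscomp f s * d⁄dX L s - (n : L⟦X⟧) * X ^ (n - 1) * pscomp b s

section AssociatedDefect

variable {f b s u : L⟦X⟧} {c Δ : L} {n r m : ℕ}

theorem X_pow_succ_dvd_natCast_mul_X_pow (n : ℕ) :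
    X ^ (n + 1) ∣ ((n + 1 : ℕ) : L⟦X⟧) * X ^ (n + 1 - 1) - C ((n + 1 : ℕ) : L) * X ^ n := by
  simp

theorem X_pow_succ_dvd_associatedDefect_sub (hf : X ^ (n + r) ∣ f) (hb : X ^ r ∣ b)
    (hs : X ^ 2 ∣ s - C c * X) :
    X ^ (n + r + 1) ∣ associatedDefect f b (n + 1) s -
      C (c ^ r * (coeff (n + r) f * c ^ (n + 1) - (n + 1) * coeff r b)) * X ^ (n + r) := by
  have h := pow_succ_dvd_sub_sub_mul_pow
    (pow_succ_dvd_mul_sub_mul_pow (X_pow_succ_dvd_pscomp_sub hf hs) (X_dvd_derivative_sub hs)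
      (add_zero _))
    (pow_succ_dvd_mul_sub_mul_pow (X_pow_succ_dvd_natCast_mul_X_pow n)
      (X_pow_succ_dvd_pscomp_sub hb hs) rfl)
  convert h using 3
  · rfl
  · simp only [map_mul, map_sub, map_add, map_pow, map_natCast, map_one, Nat.cast_add,
      Nat.cast_one]
    ring

theorem X_pow_succ_dvd_associatedDefect_sub_associatedDefect (hf : X ^ (n + r) ∣ f)
    (hb : X ^ r ∣ b) (hs : X ^ 2 ∣ s - C c * X) (hu : X ^ 2 ∣ u - C c * X)
    (hsu : X ^ (m + 2) ∣ s - u - C Δ * X ^ (m + 1)) :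
    X ^ (n + r + m + 1) ∣ associatedDefect f b (n + 1) s - associatedDefect f b (n + 1) u -
      C ((coeff (n + r) f * c ^ (n + r) * (n + r + m + 1) -
        (n + 1) * coeff r b * r * c ^ (r - 1)) * Δ) * X ^ (n + r + m) := by
  have h := pow_succ_dvd_sub_sub_mul_pow (X_pow_succ_dvd_pscomp_mul_derivative_sub hf hs hu hsu)
    (pow_succ_dvd_mul_sub_mul_pow (X_pow_succ_dvd_natCast_mul_X_pow n)
      (X_pow_succ_dvd_pscomp_sub_pscomp hb hs hu hsu) (N := n + r + m) (by omega))
  convert h using 2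
  · simp only [associatedDefect]
    ring
  · simp only [map_mul, map_sub, map_add, map_pow, map_natCast, map_one]
    push_cast
    ring

theorem isTriangularAt_associatedDefect (hf : X ^ (n + r) ∣ f) (hb : X ^ r ∣ b)
    (hc : coeff (n + r) f * c ^ (n + 1) = (n + 1) * coeff r b) :
    IsTriangularAt (associatedDefect f b (n + 1)) (C c * X) (n + r)
      (fun m => coeff (n + r) f * c ^ (n + r) * (n + m + 1)) := by
  intro s u Δ m hs hu hsu
  convert X_pow_succ_dvd_associatedDefect_sub_associatedDefect hf hb hs hu hsu using 4
  rcases r with _ | r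
  · simp
  · simp only [Nat.add_sub_cancel, Nat.cast_add, Nat.cast_one]
    linear_combination (-(r + 1) * c ^ r * Δ) * hc

theorem X_pow_dvd_associatedDefect_C_mul_X (hf : X ^ (n + r) ∣ f) (hb : X ^ r ∣ b)
    (hc : coeff (n + r) f * c ^ (n + 1) = (n + 1) * coeff r b) :
    X ^ (n + r + 1) ∣ associatedDefect f b (n + 1) (C c * X) := by
  simpa [hc] using X_pow_succ_dvd_associatedDefect_sub hf hb (s := C c * X) (c := c) (by simp)

theorem root_of_associatedDefect_eq_zero (hf : X ^ (n + r) ∣ f) (hb : X ^ r ∣ b)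
    (hs : X ^ 2 ∣ s - C c * X) (hc : c ≠ 0) (hs0 : associatedDefect f b (n + 1) s = 0) :
    coeff (n + r) f * c ^ (n + 1) = (n + 1) * coeff r b := by
  have h := (X_pow_succ_dvd_sub_C_mul_X_pow_iff.1 (X_pow_succ_dvd_associatedDefect_sub hf hb hs)).2
  rw [hs0, map_zero, eq_comm, mul_eq_zero, sub_eq_zero] at h
  exact h.resolve_left (pow_ne_zero r hc)

theorem existsUnique_associatedDefect_eq_zero [CharZero L] (hf : X ^ (n + r) ∣ f)
    (hb : X ^ r ∣ b) (hf0 : coeff (n + r) f ≠ 0) (hc0 : c ≠ 0)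
    (hc : coeff (n + r) f * c ^ (n + 1) = (n + 1) * coeff r b) :
    ∃! s, X ^ 2 ∣ s - C c * X ∧ associatedDefect f b (n + 1) s = 0 :=
  (isTriangularAt_associatedDefect hf hb hc).existsUnique_eq_zero
    (fun m => mul_ne_zero (mul_ne_zero hf0 (pow_ne_zero _ hc0))
      (by exact_mod_cast Nat.succ_ne_zero (n + m)))
    (X_pow_dvd_associatedDefect_C_mul_X hf hb hc)

theorem ncard_associatedDefect_eq_zero [IsAlgClosed L] [CharZero L] (hf : X ^ (n + r) ∣ f)
    (hb : X ^ r ∣ b) (hf0 : coeff (n + r) f ≠ 0) (hb0 : coeff r b ≠ 0) :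
    {s | constantCoeff s = 0 ∧ coeff 1 s ≠ 0 ∧ associatedDefect f b (n + 1) s = 0}.ncard =
      n + 1 := by
  have he : (n + 1) * coeff r b / coeff (n + r) f ≠ 0 :=
    div_ne_zero (mul_ne_zero (Nat.cast_add_one_ne_zero n) hb0) hf0
  have hroots : {c : L | c ^ (n + 1) = (n + 1) * coeff r b / coeff (n + r) f}.ncard = n + 1 :=
    ncard_setOf_pow_eq (by exact_mod_cast Nat.succ_ne_zero n) he
  have hroot_iff (c : L) :
      c ^ (n + 1) = (n + 1) * coeff r b / coeff (n + r) f ↔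
        coeff (n + r) f * c ^ (n + 1) = (n + 1) * coeff r b := by
    rw [eq_div_iff hf0, mul_comm]
  refine (Set.ncard_congr (fun s _ => coeff 1 s) ?_ ?_ ?_).trans hroots
  · rintro s ⟨hs0, hs1, hs⟩
    exact (hroot_iff _).2 (root_of_associatedDefect_eq_zero hf hb
      (X_sq_dvd_sub_C_mul_X_iff.2 ⟨hs0, rfl⟩) hs1 hs)
  · rintro s u ⟨hs0, hs1, hs⟩ ⟨hu0, -, hu⟩ h1
    have hsc := X_sq_dvd_sub_C_mul_X_iff.2 ⟨hs0, rfl⟩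
    exact (existsUnique_associatedDefect_eq_zero hf hb hf0 hs1
      (root_of_associatedDefect_eq_zero hf hb hsc hs1 hs)).unique ⟨hsc, hs⟩
      ⟨X_sq_dvd_sub_C_mul_X_iff.2 ⟨hu0, h1.symm⟩, hu⟩
  · intro c hc
    have hc0 : c ≠ 0 := by
      rintro rfl
      exact he (by simpa using hc.symm)
    obtain ⟨s, ⟨hsc, hs⟩, -⟩ :=
      existsUnique_associatedDefect_eq_zero hf hb hf0 hc0 ((hroot_iff c).1 hc)
    obtain ⟨hs0, hs1⟩ := X_sq_dvd_sub_C_mul_X_iff.1 hsc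
    exact ⟨s, ⟨hs0, hs1 ▸ hc0, hs⟩, hs1⟩

end AssociatedDefect

theorem associated_equation_solution_count_general
    [IsAlgClosed L] [CharZero L]
    (a b : PowerSeries L) (y0 : L) (k r n : ℕ)
    (hk : (a - PowerSeries.C y0).order = k)
    (hr : b.order = r)
    (hn : (k : ℤ) - r = n) (hnpos : 0 < n) :
    {s : PowerSeries L |
        PowerSeries.constantCoeff s = 0 ∧ PowerSeries.coeff 1 s ≠ 0 ∧
        pscomp a.derivativeFun s * s.derivativeFun =
          (n : PowerSeries L) * PowerSeries.X ^ (n - 1) * pscomp b s}.ncard = n := by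
  obtain ⟨n, rfl⟩ := Nat.exists_eq_add_one.2 hnpos
  obtain rfl : k = n + r + 1 := by omega
  obtain ⟨hα, ha⟩ := order_eq_nat.1 hk
  obtain ⟨hβ, hb⟩ := order_eq_nat.1 hr
  have hda : X ^ (n + r + 1) ∣ d⁄dX L a -
      C ((↑(n + r) + 1) * coeff (n + r + 1) (a - C y0)) * X ^ (n + r) := by
    simpa using X_pow_succ_dvd_derivative_sub (j := n + r)
      (X_pow_succ_dvd_sub_coeff_mul_X_pow (X_pow_dvd_iff.2 ha))
  have hf0 : coeff (n + r) (d⁄dX L a) ≠ 0 := by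
    rw [(X_pow_succ_dvd_sub_C_mul_X_pow_iff.1 hda).2]
    exact mul_ne_zero (Nat.cast_add_one_ne_zero _) hα
  convert ncard_associatedDefect_eq_zero (pow_dvd_of_pow_succ_dvd_sub_mul_pow hda)
    (X_pow_dvd_iff.2 hb) hf0 hβ using 4 with s
  rw [associatedDefect, sub_eq_zero]
  rfl

/-- **Counting the solutions of the associated differential equation.**
Let `L` be an algebraically closed field of characteristic zero and let
`a, b ∈ L[[t]]` be formal power series with `a(0) = y₀`,
`ord_t(a − y₀) = k > 0`, `ord_t(b) = r ≥ 0` and `k − r = n` for a positive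
integer `n`.  Then there are exactly `n` formal power series `s(t) ∈ L[[t]]` of
order one (`s(0) = 0`, `s'(0) ≠ 0`) satisfying the associated differential
equation `a'(s(t)) · s'(t) = n · t^{n−1} · b(s(t))`. -/
theorem associated_equation_solution_count
    [IsAlgClosed L] [CharZero L]
    (a b : PowerSeries L) (y0 : L) (k r n : ℕ)
    (hy0 : PowerSeries.constantCoeff a = y0)
    (hk : (a - PowerSeries.C y0).order = k) (hkpos : 0 < k)
    (hr : b.order = r)
    (hn : (k : ℤ) - r = n) (hnpos : 0 < n) :
    {s : PowerSeries L |
        PowerSeries.constantCoeff s = 0 ∧ PowerSeries.coeff 1 s ≠ 0 ∧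
        pscomp a.derivativeFun s * s.derivativeFun =
          (n : PowerSeries L) * PowerSeries.X ^ (n - 1) * pscomp b s}.ncard = n :=
  associated_equation_solution_count_general a b y0 k r n hk hr hn hnpos
end
end

section
/- Let G(x,y) ∈ K[x,y] with deg_y G = d_y, and let y(x) = ȳ(x) + φ(x) be a Puiseux series with G(x, y(x)) = 0, ord_x(ȳ(x)) = ν' ≤ 0 and ord_x(φ(x)) > N > 0. Then ord_x(G(x, ȳ(x))) > ν'·(d_y − 1) + N. -/
/-!
Since `G(x, y) = 0`, the series `G(x, ȳ) = G(x, ȳ) - G(x, y)` is a sum of terms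
`c · xᵃ · (ȳᵇ - yᵇ)` with `b ≤ d_y`, and `ȳᵇ - yᵇ = (ȳ - y) · ∑ ȳⁱ y^(b-1-i)`. Both `ȳ` and
`y = ȳ + φ` have order at least `ν' ≤ 0`, so the geometric sum has order at least
`ν' (d_y - 1)`, while `ȳ - y = -φ` has order greater than `N`.
-/

noncomputable section
open HahnSeries

variable {L : Type*} [Field L]

/-- formal derivative of a Laurent series -/
def lderiv (f : LaurentSeries L) : LaurentSeries L :=
  { coeff := fun n => (n + 1 : ℤ) • f.coeff (n + 1)
    isPWO_support' := by
      apply Set.IsPWO.mono (Set.IsPWO.image_of_monotone f.isPWO_support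
        (f := fun n => n - 1) (fun a b h => by simpa using h))
      intro n hn
      refine ⟨n + 1, ?_, by simp⟩
      simp only [Function.mem_support] at hn ⊢
      exact fun h => hn (by rw [h]; simp) }

/-- A Puiseux series `y(x) = Y(x^{1/n})` is represented by a Laurent series `Y`
in the variable `t = x^{1/n}`.  Its derivative `dy/dx`, re-expanded in `t`, is
`Y'(t)/(n t^{n-1})`. -/
def bOf (n : ℕ) (Y : LaurentSeries L) : LaurentSeries L :=
  HahnSeries.single (1 - (n : ℤ)) ((n : L)⁻¹) * lderiv Y


open MvPolynomial Function Finset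

namespace AddValuation

variable {A : Type*} [CommRing A] (v : AddValuation A (WithTop ℤ))

theorem coe_mul_le_map_pow {μ : ℤ} {a : A} (ha : (μ : WithTop ℤ) ≤ v a) (i : ℕ) :
    ((i * μ : ℤ) : WithTop ℤ) ≤ v (a ^ i) := by
  rw [v.map_pow, ← nsmul_eq_mul, WithTop.coe_nsmul]
  exact nsmul_le_nsmul_right ha i

theorem coe_mul_add_map_sub_le_map_pow_sub_pow {μ : ℤ} (hμ : μ ≤ 0) {a c : A}
    (ha : (μ : WithTop ℤ) ≤ v a) (hc : (μ : WithTop ℤ) ≤ v c) {b : ℕ} {d : ℤ} (hbd : b ≤ d) :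
    (((d - 1) * μ : ℤ) : WithTop ℤ) + v (a - c) ≤ v (a ^ b - c ^ b) := by
  rcases b with _ | k
  · simp
  rw [← geom_sum₂_mul, v.map_mul]
  refine add_le_add_left (v.map_le_sum fun i hi => ?_) _
  have hik : i ≤ k := Nat.lt_succ_iff.mp (mem_range.mp hi)
  have hμk : (d - 1) * μ ≤ i * μ + (k - i : ℕ) * μ := by
    push_cast [hik] at hbd ⊢
    nlinarith
  calc (((d - 1) * μ : ℤ) : WithTop ℤ) ≤ ((i * μ : ℤ) : WithTop ℤ) + (((k - i : ℕ) * μ : ℤ)) := by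
        exact_mod_cast hμk
    _ ≤ v (a ^ i * c ^ (k + 1 - 1 - i)) := by
        rw [v.map_mul, Nat.add_sub_cancel]
        exact add_le_add (v.coe_mul_le_map_pow ha i) (v.coe_mul_le_map_pow hc _)

theorem coe_mul_add_map_sub_le_map_aeval_update_sub {R σ : Type*} [CommSemiring R] [Algebra R A]
    [Fintype σ] [DecidableEq σ] (hR : ∀ r : R, 0 ≤ v (algebraMap R A r)) {f : σ → A} {i : σ}
    (hf : ∀ j ≠ i, 0 ≤ v (f j)) {μ : ℤ} (hμ : μ ≤ 0) {a c : A}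
    (ha : (μ : WithTop ℤ) ≤ v a) (hc : (μ : WithTop ℤ) ≤ v c) (G : MvPolynomial σ R) :
    ((((degreeOf i G : ℤ) - 1) * μ : ℤ) : WithTop ℤ) + v (a - c) ≤
      v (aeval (update f i a) G - aeval (update f i c) G) := by
  simp only [aeval_def, eval₂_eq', ← sum_sub_distrib]
  refine v.map_le_sum fun m hm => ?_
  set P := ∏ j ∈ univ \ {i}, f j ^ m j
  have hprod (b : A) : ∏ j, update f i b j ^ m j = b ^ m i * P := by
    rw [show (fun j => update f i b j ^ m j) = update (fun j => f j ^ m j) i (b ^ m i) from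
      funext (apply_update (fun j x => x ^ m j) f i b), prod_update_of_mem (mem_univ i)]
  have hP : 0 ≤ v P := by
    refine prod_induction _ (fun x => 0 ≤ v x) (fun x y hx hy => ?_) v.map_one.ge fun j hj => ?_
    · rw [v.map_mul]; exact add_nonneg hx hy
    · rw [v.map_pow]; exact nsmul_nonneg (hf j (by simpa using hj)) _
  rw [hprod, hprod, show ∀ r : A, r * (a ^ m i * P) - r * (c ^ m i * P)
      = r * P * (a ^ m i - c ^ m i) from fun r => by ring, v.map_mul, v.map_mul]
  calc _ = 0 + 0 + ((((degreeOf i G : ℤ) - 1) * μ : ℤ) : WithTop ℤ) + v (a - c) := by simp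
    _ ≤ _ := by
      rw [add_assoc]
      exact add_le_add (add_le_add (hR _) hP) (v.coe_mul_add_map_sub_le_map_pow_sub_pow hμ ha hc
        (by exact_mod_cast monomial_le_degreeOf i hm))

end AddValuation

theorem HahnSeries.forall_coeff_eq_zero_iff_floor_lt_orderTop {R 𝕜 : Type*} [Zero R] [Ring 𝕜]
    [LinearOrder 𝕜] [IsStrictOrderedRing 𝕜] [FloorRing 𝕜] (f : HahnSeries ℤ R) (r : 𝕜) :
    (∀ j : ℤ, (j : 𝕜) ≤ r → f.coeff j = 0) ↔ (⌊r⌋ : WithTop ℤ) < f.orderTop := by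
  refine ⟨fun h => ?_, fun h j hj =>
    coeff_eq_zero_of_lt_orderTop ((WithTop.coe_le_coe.2 (Int.le_floor.2 hj)).trans_lt h)⟩
  by_contra! hle
  have hf : f ≠ 0 := by rintro rfl; simp at hle
  rw [← order_eq_orderTop_of_ne_zero hf, WithTop.coe_le_coe] at hle
  exact hf (coeff_order_eq_zero.1 (h _ (Int.le_floor.1 hle)))

/-- The variables of `G` are `0 = x` and `1 = y`. Puiseux series in `x` are represented by
Laurent series in `t = x^{1/n}`, so `ord_x = ord_t / n`, and an order bound `ord_x(f) > β`
reads: all coefficients of index `j ≤ n·β` vanish. -/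
theorem order_bound_at_truncation_general
    (K : Type*) [Field K]
    (G : MvPolynomial (Fin 2) K) (dy : ℕ) (hdy : dy = MvPolynomial.degreeOf 1 G)
    (n : ℕ)
    (Y Ybar : LaurentSeries (AlgebraicClosure K))
    (hsol : MvPolynomial.aeval
      ![(HahnSeries.single (n : ℤ) 1 : LaurentSeries (AlgebraicClosure K)), Y] G = 0)
    (ν' N : ℚ) (hν'0 : ν' ≤ 0) (hNpos : 0 < N)
    (hYbar : Ybar ≠ 0) (hord : (Ybar.order : ℚ) = n * ν')
    (hφ : ∀ j : ℤ, (j : ℚ) ≤ N * n → (Y - Ybar).coeff j = 0) :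
    ∀ j : ℤ, (j : ℚ) ≤ n * (ν' * (dy - 1) + N) →
      (MvPolynomial.aeval
        ![(HahnSeries.single (n : ℤ) 1 : LaurentSeries (AlgebraicClosure K)), Ybar]
        G).coeff j = 0 := by
  set v := addVal ℤ (AlgebraicClosure K)
  set x : LaurentSeries (AlgebraicClosure K) := single (n : ℤ) 1
  have hμ : Ybar.order ≤ 0 := by
    have : (Ybar.order : ℚ) ≤ 0 := hord ▸ mul_nonpos_of_nonneg_of_nonpos n.cast_nonneg hν'0
    exact_mod_cast this
  have hvφ : (⌊N * n⌋ : WithTop ℤ) < v (Y - Ybar) :=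
    (forall_coeff_eq_zero_iff_floor_lt_orderTop _ _).1 hφ
  have hvYbar : (Ybar.order : WithTop ℤ) ≤ v Ybar := (addVal_apply_of_ne hYbar).ge
  have hvY : (Ybar.order : WithTop ℤ) ≤ v Y := by
    rw [← add_sub_cancel Ybar Y]
    refine v.map_le_add hvYbar (le_trans ?_ hvφ.le)
    exact_mod_cast hμ.trans (Int.floor_nonneg.2 (by positivity))
  have hvconst (c : K) : 0 ≤ v (algebraMap K _ c) := by
    rw [addVal_apply, algebraMap_apply', PowerSeries.algebraMap_apply, ofPowerSeries_C,
      HahnSeries.C_apply]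
    exact orderTop_single_le
  have hvx : ∀ j ≠ (1 : Fin 2), 0 ≤ v (![x, Y] j) := by
    intro j hj
    obtain rfl : j = 0 := by omega
    exact (WithTop.coe_nonneg.2 n.cast_nonneg).trans orderTop_single_le
  have hupd (b) : update ![x, Y] 1 b = ![x, b] := by
    funext j; fin_cases j <;> rfl
  have key := v.coe_mul_add_map_sub_le_map_aeval_update_sub hvconst hvx hμ hvYbar hvY G
  rw [hupd, hupd, hsol, sub_zero, v.map_sub_swap, ← hdy] at key
  have hT : (n : ℚ) * (ν' * (dy - 1) + N) = (((dy : ℤ) - 1) * Ybar.order : ℤ) + N * n := by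
    push_cast; rw [hord]; ring
  rw [forall_coeff_eq_zero_iff_floor_lt_orderTop, hT, Int.floor_intCast_add, WithTop.coe_add,
    ← addVal_apply]
  exact (WithTop.add_lt_add_left WithTop.coe_ne_top hvφ).trans_le key

/-- **Order bound for the evaluation at a truncation.**
Let `G ∈ K[x,y]` (variables `0 = x`, `1 = y`) with `deg_y G = d_y`, and let
`y(x) = ȳ(x) + φ(x)` be a Puiseux series with `G(x, y(x)) = 0`,
`ord_x(ȳ) = ν' ≤ 0` and `ord_x(φ) > N > 0`.  Then
`ord_x(G(x, ȳ(x))) > ν'·(d_y − 1) + N`.  (Puiseux series in `x` are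
represented by Laurent series in `t = x^{1/n}`, so `ord_x = ord_t / n`, and an
order bound `ord_x(f) > β` reads: all coefficients of index `j ≤ n·β`
vanish.) -/
theorem order_bound_at_truncation
    (K : Type*) [Field K] [CharZero K]
    (G : MvPolynomial (Fin 2) K) (dy : ℕ) (hdy : dy = MvPolynomial.degreeOf 1 G)
    (n : ℕ) (hn : 0 < n)
    (Y Ybar : LaurentSeries (AlgebraicClosure K))
    (hsol : MvPolynomial.aeval
      ![(HahnSeries.single (n : ℤ) 1 : LaurentSeries (AlgebraicClosure K)), Y] G = 0)
    (ν' N : ℚ) (hν'0 : ν' ≤ 0) (hNpos : 0 < N)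
    (hYbar : Ybar ≠ 0) (hord : (Ybar.order : ℚ) = n * ν')
    (hφ : ∀ j : ℤ, (j : ℚ) ≤ N * n → (Y - Ybar).coeff j = 0) :
    ∀ j : ℤ, (j : ℚ) ≤ n * (ν' * (dy - 1) + N) →
      (MvPolynomial.aeval
        ![(HahnSeries.single (n : ℤ) 1 : LaurentSeries (AlgebraicClosure K)), Ybar]
        G).coeff j = 0 :=
  order_bound_at_truncation_general K G dy hdy n Y Ybar hsol ν' N hν'0 hNpos hYbar hord hφ
end
end

section
/- The map Δ sending a non-constant formal Puiseux series solution y(x) of F(y, y') = 0 with ramification order n and initial value y(0) = y₀ ∈ K̄ to the pair (y(tⁿ), (dy/dx)(tⁿ)) is injective, and its image consists of irreducible formal parametrizations of the curve F(y, p) = 0: that is, the pair (a(t), b(t)) = Δ(y) satisfies F(a(t), b(t)) = 0 and is not of the form (ã(t^m), b̃(t^m)) for any m > 1. -/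
noncomputable section
open HahnSeries

variable {L : Type*} [Field L]

/-- `Y` (a Laurent series in `t = x^{1/n}`) represents a non-constant formal
Puiseux series solution `y(x) = Y(x^{1/n})` of `F(y, y') = 0` with `y(0)` finite
and with ramification order exactly `n` (minimality: no `d > 1` dividing `n`
divides every exponent of `Y`). -/
def IsPuiseuxSolutionRep {K : Type*} [Field K]
    (F : MvPolynomial (Fin 2) K) (n : ℕ) (Y : LaurentSeries (AlgebraicClosure K)) : Prop :=
  0 < n ∧
  MvPolynomial.aeval ![Y, bOf n Y] F = 0 ∧
  (∀ j : ℤ, j < 0 → Y.coeff j = 0) ∧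
  (¬ ∃ c : AlgebraicClosure K, Y = HahnSeries.C c) ∧
  (∀ d : ℕ, 1 < d → (d : ℤ) ∣ n → ¬ ∀ j ∈ Y.support, (d : ℤ) ∣ j)

/-! Since `Y` is not constant, `lderiv Y ≠ 0`, so `bOf n Y = t^{1-n}/n · Y'(t)` determines the
monomial `t^{1-n}/n`, hence `n`. A nonzero exponent `j` of `Y` yields the
exponent `j - n` of `bOf n Y`; hence an `m` dividing all exponents of both components divides `n`
as well as every exponent of `Y`, contradicting the minimality of the ramification order `n`. -/

lemma coeff_lderiv_sub_one (f : LaurentSeries L) (j : ℤ) :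
    (lderiv f).coeff (j - 1) = (j : L) * f.coeff j := by
  show (j - 1 + 1 : ℤ) • f.coeff (j - 1 + 1) = _
  rw [sub_add_cancel, zsmul_eq_mul]

lemma lderiv_ne_zero [CharZero L] {f : LaurentSeries L} {j : ℤ} (hj : j ≠ 0)
    (hf : f.coeff j ≠ 0) : lderiv f ≠ 0 := fun h0 => by
  have h := coeff_lderiv_sub_one f j
  rw [h0, HahnSeries.coeff_zero] at h
  exact mul_ne_zero (Int.cast_ne_zero.mpr hj) hf h.symm

lemma coeff_bOf_sub (n : ℕ) (Y : LaurentSeries L) (j : ℤ) :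
    (bOf n Y).coeff (j - n) = (n : L)⁻¹ * ((j : L) * Y.coeff j) := by
  rw [bOf, show j - n = (j - 1) + (1 - (n : ℤ)) by ring, HahnSeries.coeff_single_mul_add,
    coeff_lderiv_sub_one]

lemma coeff_bOf_sub_ne_zero [CharZero L] {n : ℕ} {Y : LaurentSeries L} {j : ℤ} (hn : n ≠ 0)
    (hj : j ≠ 0) (hY : Y.coeff j ≠ 0) : (bOf n Y).coeff (j - n) ≠ 0 := by
  rw [coeff_bOf_sub]
  exact mul_ne_zero (inv_ne_zero (Nat.cast_ne_zero.mpr hn))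
    (mul_ne_zero (Int.cast_ne_zero.mpr hj) hY)

lemma eq_of_bOf_eq [CharZero L] {n₁ n₂ : ℕ} {Y : LaurentSeries L} (hn₁ : n₁ ≠ 0)
    (hY : lderiv Y ≠ 0) (h : bOf n₁ Y = bOf n₂ Y) : n₁ = n₂ := by
  have hs := mul_right_cancel₀ hY h
  have h₁ : (n₁ : L)⁻¹ ≠ 0 := inv_ne_zero (Nat.cast_ne_zero.mpr hn₁)
  have h₂ : (n₂ : L)⁻¹ ≠ 0 := by
    intro h0
    rw [h0, HahnSeries.single_eq_zero] at hs
    exact HahnSeries.single_ne_zero h₁ hs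
  have horder := congrArg HahnSeries.order hs
  rw [HahnSeries.order_single h₁, HahnSeries.order_single h₂] at horder
  omega

namespace IsPuiseuxSolutionRep

variable {K : Type*} [Field K] {F : MvPolynomial (Fin 2) K} {n : ℕ}
  {Y : LaurentSeries (AlgebraicClosure K)}

lemma exists_coeff_ne_zero (h : IsPuiseuxSolutionRep F n Y) : ∃ j ≠ 0, Y.coeff j ≠ 0 := by
  by_contra! hY
  refine h.2.2.2.1 ⟨Y.coeff 0, ?_⟩
  ext j
  rcases eq_or_ne j 0 with rfl | hj
  · simp [HahnSeries.C_apply]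
  · simp [HahnSeries.C_apply, HahnSeries.coeff_single_of_ne hj, hY j hj]

variable [CharZero K]

lemma eq_of_bOf_eq {n' : ℕ} (h : IsPuiseuxSolutionRep F n Y) (hb : bOf n Y = bOf n' Y) :
    n = n' := by
  obtain ⟨j, hj, hY⟩ := h.exists_coeff_ne_zero
  exact _root_.eq_of_bOf_eq h.1.ne' (lderiv_ne_zero hj hY) hb

lemma not_exists_dvd_support (h : IsPuiseuxSolutionRep F n Y) :
    ¬ ∃ m : ℕ, 1 < m ∧ (∀ j ∈ Y.support, (m : ℤ) ∣ j) ∧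
      (∀ j ∈ (bOf n Y).support, (m : ℤ) ∣ j) := by
  rintro ⟨m, hm, hdvdY, hdvdb⟩
  obtain ⟨j, hj, hY⟩ := h.exists_coeff_ne_zero
  have hdvdj := hdvdY j hY
  have hdvdjn := hdvdb (j - n) (coeff_bOf_sub_ne_zero h.1.ne' hj hY)
  exact h.2.2.2.2 m hm (by simpa using dvd_sub hdvdj hdvdjn) hdvdY

end IsPuiseuxSolutionRep

/-- **`Δ` is injective and its image consists of irreducible formal
parametrizations.**  The map `Δ` sends a non-constant Puiseux series solution
`y(x)` of `F(y, y') = 0` with ramification order `n` and finite initial value —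
represented by the Laurent series `Y` in `t = x^{1/n}` — to the pair
`(a(t), b(t)) = (y(tⁿ), (dy/dx)(tⁿ)) = (Y, bOf n Y)`.  Then `Δ` is injective,
and each `Δ`-image `(a, b)` satisfies `F(a(t), b(t)) = 0` and is not of the
form `(ã(t^m), b̃(t^m))` for any `m > 1`. -/
theorem Delta_injective_image_irreducible
    (K : Type*) [Field K] [CharZero K]
    (F : MvPolynomial (Fin 2) K) :
    (∀ (n₁ n₂ : ℕ) (Y₁ Y₂ : LaurentSeries (AlgebraicClosure K)),
      IsPuiseuxSolutionRep F n₁ Y₁ → IsPuiseuxSolutionRep F n₂ Y₂ →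
      Y₁ = Y₂ → bOf n₁ Y₁ = bOf n₂ Y₂ → n₁ = n₂ ∧ Y₁ = Y₂) ∧
    (∀ (n : ℕ) (Y : LaurentSeries (AlgebraicClosure K)),
      IsPuiseuxSolutionRep F n Y →
      MvPolynomial.aeval ![Y, bOf n Y] F = 0 ∧
      ¬ ∃ m : ℕ, 1 < m ∧ (∀ j ∈ Y.support, (m : ℤ) ∣ j) ∧
        (∀ j ∈ (bOf n Y).support, (m : ℤ) ∣ j)) := by
  refine ⟨?_, fun n Y h => ⟨h.2.1, h.not_exists_dvd_support⟩⟩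
  rintro n₁ n₂ Y _ h₁ - rfl hb
  exact ⟨h₁.eq_of_bOf_eq hb, rfl⟩
end
end

section
/- Suppose y₁(x) and y₂(x) are two formal Puiseux series solutions of F(y, y') = 0 lying in the same place of the curve F(y,p) = 0, i.e., their associated parametrizations Δ(y₁) and Δ(y₂) are related by reparametrization by an order-one formal power series. Then y₁ and y₂ have the same ramification order. -/
noncomputable section
open HahnSeries

variable {L : Type*} [Field L]

/-- composition `f(s(t))` of a Laurent series `f` with a power series `s` of
order one, via `f = t^{ord f} · (power series part of f)`. -/
def lcomp (f : LaurentSeries L) (s : PowerSeries L) : LaurentSeries L :=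
  (HahnSeries.ofPowerSeries ℤ L s) ^ f.order *
    HahnSeries.ofPowerSeries ℤ L (pscomp f.powerSeriesPart s)

/-!
The exponent `m` of the first non-constant term of `Y` is not changed by an order-one
reparametrization `t ↦ s(t)`, and neither is the order of any Laurent series. Since
`Y'(t)/(n t^{n-1})` has order `m - n`, the second components of `Δ(y₁)` and `Δ(y₂)` have
orders `m - n₁` and `m - n₂`, which must then agree.
-/

namespace PowerSeries

variable {R : Type*} [CommSemiring R] {s : PowerSeries R}

theorem coeff_pow_self_of_constantCoeff_eq_zero (hs : constantCoeff s = 0) (k : ℕ) :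
    coeff k (s ^ k) = coeff 1 s ^ k := by
  obtain ⟨r, rfl⟩ := X_dvd_iff.mpr hs
  simp [mul_pow, coeff_X_pow_mul', coeff_succ_X_mul]

end PowerSeries

section Composition

variable {s : PowerSeries L}

@[simp]
theorem pscomp_zero : pscomp 0 s = 0 := by
  ext
  simp [pscomp]

theorem coeff_zero_pscomp (f : PowerSeries L) :
    PowerSeries.coeff 0 (pscomp f s) = PowerSeries.coeff 0 f := by
  simp [pscomp]

theorem coeff_pscomp_of_forall_lt (f : PowerSeries L) (hs : PowerSeries.constantCoeff s = 0)
    {j : ℕ} (hj : 0 < j) (hf : ∀ k, 0 < k → k < j → PowerSeries.coeff k f = 0) :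
    PowerSeries.coeff j (pscomp f s) = PowerSeries.coeff j f * PowerSeries.coeff 1 s ^ j := by
  rw [pscomp, PowerSeries.coeff_mk, Finset.sum_eq_single_of_mem j (Finset.self_mem_range_succ j),
    PowerSeries.coeff_pow_self_of_constantCoeff_eq_zero hs]
  intro k hk hkj
  rcases Nat.eq_zero_or_pos k with rfl | hk0
  · simp [PowerSeries.coeff_one, hj.ne']
  · rw [hf k hk0 (lt_of_le_of_ne (Finset.mem_range_succ_iff.mp hk) hkj), zero_mul]

end Composition

theorem HahnSeries.order_eq_of_coeff_ne_zero {Γ R : Type*} [Zero Γ] [LinearOrder Γ] [Zero R]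
    {x : HahnSeries Γ R} {i : Γ} (hi : x.coeff i ≠ 0) (h : ∀ j < i, x.coeff j = 0) :
    x.order = i :=
  le_antisymm (order_le_of_coeff_ne_zero hi)
    ((le_order_iff_forall (ne_zero_of_coeff_ne_zero hi)).mpr h)

namespace LaurentSeries

theorem order_zpow {x : LaurentSeries L} (hx : x ≠ 0) (z : ℤ) :
    (x ^ z).order = z * x.order := by
  have order_inv {y : LaurentSeries L} (hy : y ≠ 0) : y⁻¹.order = -y.order := by
    have h := order_mul hy (inv_ne_zero hy)
    rw [mul_inv_cancel₀ hy, order_one] at h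
    linarith
  cases z with
  | ofNat n => simp
  | negSucc n =>
    rw [zpow_negSucc, order_inv (pow_ne_zero _ hx), order_pow, Int.negSucc_eq]
    ring

theorem order_ofPowerSeries_of_coeff_ne_zero {g : PowerSeries L} {n : ℕ}
    (hn : PowerSeries.coeff n g ≠ 0) (h : ∀ k < n, PowerSeries.coeff k g = 0) :
    (ofPowerSeries ℤ L g).order = n := by
  refine order_eq_of_coeff_ne_zero (by simpa using hn) fun j hj => ?_
  rw [PowerSeries.coeff_coe]
  split_ifs with hj0
  · rfl
  · exact h _ (by omega)

variable {s : PowerSeries L}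

theorem order_lcomp (f : LaurentSeries L) (hs0 : PowerSeries.constantCoeff s = 0)
    (hs1 : PowerSeries.coeff 1 s ≠ 0) : (lcomp f s).order = f.order := by
  rcases eq_or_ne f 0 with rfl | hf
  · simp [lcomp]
  have hs : (ofPowerSeries ℤ L s).order = 1 :=
    order_ofPowerSeries_of_coeff_ne_zero hs1 fun k hk => by
      rw [Nat.lt_one_iff.mp hk, PowerSeries.coeff_zero_eq_constantCoeff_apply, hs0]
  have hc : PowerSeries.coeff 0 (pscomp f.powerSeriesPart s) ≠ 0 := by
    rw [coeff_zero_pscomp, powerSeriesPart_coeff, Nat.cast_zero, add_zero]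
    exact coeff_order_eq_zero.not.mpr hf
  have hcomp : (ofPowerSeries ℤ L (pscomp f.powerSeriesPart s)).order = 0 :=
    order_ofPowerSeries_of_coeff_ne_zero hc (by simp)
  have hs_ne : ofPowerSeries ℤ L s ≠ 0 :=
    ne_zero_of_coeff_ne_zero (g := ((1 : ℕ) : ℤ)) (by rwa [coeff_coe_powerSeries])
  have hcomp_ne : ofPowerSeries ℤ L (pscomp f.powerSeriesPart s) ≠ 0 :=
    ne_zero_of_coeff_ne_zero (g := ((0 : ℕ) : ℤ)) (by rwa [coeff_coe_powerSeries])
  rw [lcomp, order_mul (zpow_ne_zero _ hs_ne) hcomp_ne, order_zpow hs_ne, hs, hcomp]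
  ring

def positiveSupport (Y : LaurentSeries L) : Set ℤ := {j | 0 < j ∧ Y.coeff j ≠ 0}

variable {Y : LaurentSeries L} {m : ℤ}

theorem exists_isLeast_positiveSupport (hY : ∀ j < 0, Y.coeff j = 0)
    (hc : ¬ ∃ c, Y = HahnSeries.C c) : ∃ m, IsLeast (positiveSupport Y) m := by
  have hne : (positiveSupport Y).Nonempty := by
    by_contra h
    refine hc ⟨Y.coeff 0, HahnSeries.ext (funext fun j => ?_)⟩
    rcases lt_trichotomy j 0 with hj | rfl | hj
    · simp [hY j hj, coeff_single_of_ne hj.ne]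
    · simp
    · have hj' : Y.coeff j = 0 := not_not.mp fun hj' => h ⟨j, hj, hj'⟩
      simp [hj', coeff_single_of_ne hj.ne']
  obtain ⟨m, hm, hmin⟩ := Int.exists_least_of_bdd ⟨0, fun j hj => hj.1.le⟩ hne
  exact ⟨m, hm, fun j hj => hmin j hj⟩

theorem coeff_eq_zero_of_isLeast_positiveSupport (hm : IsLeast (positiveSupport Y) m) {j : ℤ}
    (hj : 0 < j) (hjm : j < m) : Y.coeff j = 0 := by
  by_contra h
  exact (hm.2 ⟨hj, h⟩).not_gt hjm

theorem isLeast_positiveSupport_order (h : 0 < Y.order) :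
    IsLeast (positiveSupport Y) Y.order := by
  have hY : Y ≠ 0 := by
    rintro rfl
    simp at h
  exact ⟨⟨h, coeff_order_eq_zero.not.mpr hY⟩, fun j hj => order_le_of_coeff_ne_zero hj.2⟩

theorem isLeast_positiveSupport_lcomp (hs0 : PowerSeries.constantCoeff s = 0)
    (hs1 : PowerSeries.coeff 1 s ≠ 0) (hY : ∀ j < 0, Y.coeff j = 0)
    (hm : IsLeast (positiveSupport Y) m) : IsLeast (positiveSupport (lcomp Y s)) m := by
  have hY0 : Y ≠ 0 := ne_zero_of_coeff_ne_zero hm.1.2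
  have hord : 0 ≤ Y.order := by
    by_contra! h
    exact coeff_order_eq_zero.not.mpr hY0 (hY _ h)
  -- If `Y(0) ≠ 0` then `lcomp Y s` is the plain composition; otherwise `m` is the order of `Y`.
  rcases hord.eq_or_lt with h0 | hpos
  · have hP (k : ℕ) : PowerSeries.coeff k Y.powerSeriesPart = Y.coeff k := by simp [← h0]
    have hcomp : lcomp Y s = ofPowerSeries ℤ L (pscomp Y.powerSeriesPart s) := by
      rw [lcomp, ← h0, zpow_zero, one_mul]
    lift m to ℕ using hm.1.1.le
    have hcoeff (j : ℕ) (hj : 0 < j) (hjm : j ≤ m) :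
        (lcomp Y s).coeff j = Y.coeff j * PowerSeries.coeff 1 s ^ j := by
      rw [hcomp, coeff_coe_powerSeries, coeff_pscomp_of_forall_lt _ hs0 hj, hP]
      intro k hk hkj
      rw [hP]
      exact coeff_eq_zero_of_isLeast_positiveSupport hm (by exact_mod_cast hk) (by omega)
    have hm0 : 0 < m := by exact_mod_cast hm.1.1
    refine ⟨⟨hm.1.1, ?_⟩, fun j hj => ?_⟩
    · rw [hcoeff m hm0 le_rfl]
      exact mul_ne_zero hm.1.2 (pow_ne_zero _ hs1)
    · by_contra! hjm
      lift j to ℕ using hj.1.le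
      apply hj.2
      rw [hcoeff j (by exact_mod_cast hj.1) (by omega),
        coeff_eq_zero_of_isLeast_positiveSupport hm hj.1 hjm, zero_mul]
  · have hmY : Y.order = m := (isLeast_positiveSupport_order hpos).unique hm
    rw [← hmY, ← order_lcomp Y hs0 hs1]
    exact isLeast_positiveSupport_order (by rwa [order_lcomp Y hs0 hs1])

theorem coeff_lderiv (j : ℤ) : (lderiv Y).coeff j = (j + 1) • Y.coeff (j + 1) := rfl

variable [CharZero L]

theorem coeff_lderiv_sub_one_ne_zero (hm : IsLeast (positiveSupport Y) m) :
    (lderiv Y).coeff (m - 1) ≠ 0 := by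
  rw [coeff_lderiv, sub_add_cancel]
  exact smul_ne_zero hm.1.1.ne' hm.1.2

theorem order_lderiv (hY : ∀ j < 0, Y.coeff j = 0) (hm : IsLeast (positiveSupport Y) m) :
    (lderiv Y).order = m - 1 := by
  refine order_eq_of_coeff_ne_zero (coeff_lderiv_sub_one_ne_zero hm) fun j hj => ?_
  rw [coeff_lderiv]
  rcases lt_trichotomy (j + 1) 0 with h | h | h
  · rw [hY _ h, smul_zero]
  · rw [h, zero_smul]
  · rw [coeff_eq_zero_of_isLeast_positiveSupport hm h (by omega), smul_zero]

theorem order_bOf {n : ℕ} (hn : 0 < n) (hY : ∀ j < 0, Y.coeff j = 0)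
    (hm : IsLeast (positiveSupport Y) m) : (bOf n Y).order = m - n := by
  have hn' : (n : L)⁻¹ ≠ 0 := inv_ne_zero (Nat.cast_ne_zero.mpr hn.ne')
  have hd : lderiv Y ≠ 0 := ne_zero_of_coeff_ne_zero (coeff_lderiv_sub_one_ne_zero hm)
  rw [bOf, order_mul (single_ne_zero hn') hd, order_single hn', order_lderiv hY hm]
  ring

end LaurentSeries

/-- **Solutions in the same place have the same ramification order.**
Suppose `y₁(x)` and `y₂(x)` are Puiseux series solutions of `F(y, y') = 0`
(represented by Laurent series `Y₁, Y₂` with ramification orders `n₁, n₂`)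
lying in the same place of the curve `F(y, p) = 0`: their associated
parametrizations `Δ(y₁) = (Y₁, bOf n₁ Y₁)` and `Δ(y₂) = (Y₂, bOf n₂ Y₂)` are
related by reparametrization by an order-one formal power series `s`.  Then
`n₁ = n₂`. -/
theorem same_place_same_ramification
    (K : Type*) [Field K] [CharZero K]
    (F : MvPolynomial (Fin 2) K)
    (n₁ n₂ : ℕ) (Y₁ Y₂ : LaurentSeries (AlgebraicClosure K))
    (h₁ : IsPuiseuxSolutionRep F n₁ Y₁) (h₂ : IsPuiseuxSolutionRep F n₂ Y₂)
    (s : PowerSeries (AlgebraicClosure K))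
    (hs0 : PowerSeries.constantCoeff s = 0)
    (hs1 : PowerSeries.coeff 1 s ≠ 0)
    (ha : lcomp Y₁ s = Y₂) (hb : lcomp (bOf n₁ Y₁) s = bOf n₂ Y₂) :
    n₁ = n₂ := by
  obtain ⟨hn₁, -, hY₁, hc₁, -⟩ := h₁
  obtain ⟨hn₂, -, hY₂, -, -⟩ := h₂
  obtain ⟨m, hm₁⟩ := LaurentSeries.exists_isLeast_positiveSupport hY₁ hc₁
  have hm₂ : IsLeast (LaurentSeries.positiveSupport Y₂) m :=
    ha ▸ LaurentSeries.isLeast_positiveSupport_lcomp hs0 hs1 hY₁ hm₁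
  have h := LaurentSeries.order_lcomp (bOf n₁ Y₁) hs0 hs1
  rw [hb, LaurentSeries.order_bOf hn₂ hY₂ hm₂, LaurentSeries.order_bOf hn₁ hY₁ hm₁] at h
  omega
end
end

section
/- If s(x) is a truncation of a formal power series solution y(x) of F(y, y') = 0 such that the change of variables z(x) = y(x) − s(x) transforms the equation G(x, z, z') = F(z + s(x), z' + s'(x)) = 0 into an equation of Briot–Bouquet type (quasi-solved form x·z' = c·z + x·(higher order terms) with c not a positive integer), then the extension of s(x) to a full solution y(x) of F(y, y') = 0 exists and is unique. -/
/-!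
Write `c = ∂f/∂z(0,0)`. Since `z(0) = 0`, the only term of `f(x, z(x))` whose coefficient of
`x^(n+1)` involves `z_{n+1}` is the linear term `c z`; all other terms only see `z_1, …, z_n`.
Comparing coefficients of `x^(n+1)` in `x z' = f(x, z)` therefore gives
`(n + 1 - c) z_{n+1} = P_n(z_1, …, z_n)`, and as `n + 1 ≠ c` this determines `z` uniquely.
The shift `y = s + z` matches the solutions `y` with `y(0) = s(0)` with these `z`.
-/

noncomputable section

variable {L : Type*} [Field L]

/-- Evaluation `f(X, z)` of a two-variable formal power series `f` (variables
`0 = x`, `1 = z`) at the pair `(x, z(x))`, where `z` is a power series with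
zero constant coefficient (then each coefficient of the result is the visible
finite sum). -/
def mvcomp (f : MvPowerSeries (Fin 2) L) (z : PowerSeries L) : PowerSeries L :=
  PowerSeries.mk fun n => ∑ i ∈ Finset.range (n + 1), ∑ j ∈ Finset.range (n + 1),
    MvPowerSeries.coeff (Finsupp.single 0 i + Finsupp.single 1 j) f *
      PowerSeries.coeff (n - i) (z ^ j)

open PowerSeries

theorem pow_succ_dvd_pow_sub_pow_of_dvd {R : Type*} [CommRing R] {a z w : R} {n j : ℕ}
    (hz : a ∣ z) (hw : a ∣ w) (hzw : a ^ n ∣ z - w) (hj : j ≠ 1) :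
    a ^ (n + 1) ∣ z ^ j - w ^ j := by
  match j, hj with
  | 0, _ => simp
  | j + 2, _ =>
    have split : z ^ (j + 2) - w ^ (j + 2) =
        z ^ (j + 1) * (z - w) + (z ^ (j + 1) - w ^ (j + 1)) * w := by ring
    rw [split]
    refine dvd_add ?_ ?_
    · rw [pow_succ']
      exact mul_dvd_mul (dvd_pow hz j.succ_ne_zero) hzw
    · rw [pow_succ]
      exact mul_dvd_mul (hzw.trans (sub_dvd_pow_sub_pow z w _)) hw

theorem PowerSeries.coeff_eq_of_X_pow_dvd_sub {R : Type*} [CommRing R] {φ ψ : R⟦X⟧}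
    {m k : ℕ} (h : X ^ m ∣ φ - ψ) (hk : k < m) : coeff k φ = coeff k ψ :=
  sub_eq_zero.mp (by simpa using X_pow_dvd_iff.mp h k hk)

theorem PowerSeries.X_pow_dvd_sub_trunc {R : Type*} [CommRing R] (φ : R⟦X⟧) (n : ℕ) :
    X ^ n ∣ φ - (trunc n φ : R⟦X⟧) :=
  X_pow_dvd_iff.mpr fun _ hk => by rw [map_sub, coeff_coe_trunc_of_lt hk, sub_self]

theorem PowerSeries.coeff_succ_X_mul_derivative {R : Type*} [CommRing R] (φ : R⟦X⟧)
    (n : ℕ) : coeff (n + 1) (X * d⁄dX R φ) = (n + 1) * coeff (n + 1) φ := by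
  rw [coeff_succ_X_mul, mul_comm]
  exact coeff_derivative φ n

theorem coeff_succ_mvcomp_sub_mvcomp (f : MvPowerSeries (Fin 2) L) {z w : L⟦X⟧} {n : ℕ}
    (hz : X ∣ z) (hw : X ∣ w) (hzw : X ^ (n + 1) ∣ z - w) :
    coeff (n + 1) (mvcomp f z) - coeff (n + 1) (mvcomp f w) =
      MvPowerSeries.coeff (Finsupp.single 1 1) f * (coeff (n + 1) z - coeff (n + 1) w) := by
  simp only [mvcomp, coeff_mk, ← Finset.sum_sub_distrib, ← mul_sub]
  -- only the monomial `x^0 z^1` of `f` sees the coefficient of `x^(n+1)`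
  rw [Finset.sum_eq_single 0, Finset.sum_eq_single 1]
  · simp
  · intro j _ hj
    rw [Nat.sub_zero, coeff_eq_of_X_pow_dvd_sub (pow_succ_dvd_pow_sub_pow_of_dvd hz hw hzw hj)
      (Nat.lt_succ_self _), sub_self, mul_zero]
  · simp
  · intro i _ hi
    refine Finset.sum_eq_zero fun j _ => ?_
    rw [coeff_eq_of_X_pow_dvd_sub (hzw.trans (sub_dvd_pow_sub_pow z w j)) (by omega),
      sub_self, mul_zero]
  · simp

theorem coeff_succ_briotBouquet_sub (f : MvPowerSeries (Fin 2) L) {z w : L⟦X⟧} {n : ℕ}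
    (hz : X ∣ z) (hw : X ∣ w) (hzw : X ^ (n + 1) ∣ z - w) :
    coeff (n + 1) (X * d⁄dX L z - mvcomp f z) -
        coeff (n + 1) (X * d⁄dX L w - mvcomp f w) =
      ((n + 1 : L) - MvPowerSeries.coeff (Finsupp.single 1 1) f) *
        (coeff (n + 1) z - coeff (n + 1) w) := by
  simp only [map_sub, coeff_succ_X_mul_derivative]
  linear_combination -(coeff_succ_mvcomp_sub_mvcomp f hz hw hzw)

def briotBouquetCoeff (f : MvPowerSeries (Fin 2) L) : ℕ → L
  | 0 => 0
  | n + 1 => ((n + 1 : L) - MvPowerSeries.coeff (Finsupp.single 1 1) f)⁻¹ *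
      coeff (n + 1) (mvcomp f (mk fun k => if k ≤ n then briotBouquetCoeff f k else 0))

theorem briotBouquetCoeff_succ (f : MvPowerSeries (Fin 2) L) (n : ℕ) :
    briotBouquetCoeff f (n + 1) =
      ((n + 1 : L) - MvPowerSeries.coeff (Finsupp.single 1 1) f)⁻¹ *
        coeff (n + 1) (mvcomp f (trunc (n + 1) (mk (briotBouquetCoeff f)))) := by
  rw [briotBouquetCoeff]
  congr 3
  ext k
  simp [coeff_trunc]

section BriotBouquet

variable {f : MvPowerSeries (Fin 2) L}

theorem succ_sub_coeff_ne_zero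
    (hc : ∀ m : ℕ, 0 < m → MvPowerSeries.coeff (Finsupp.single 1 1) f ≠ (m : L)) (n : ℕ) :
    (n + 1 : L) - MvPowerSeries.coeff (Finsupp.single 1 1) f ≠ 0 :=
  sub_ne_zero.mpr fun h => hc (n + 1) n.succ_pos (by exact_mod_cast h.symm)

theorem X_mul_derivative_briotBouquet (hf0 : MvPowerSeries.constantCoeff f = 0)
    (hc : ∀ m : ℕ, 0 < m → MvPowerSeries.coeff (Finsupp.single 1 1) f ≠ (m : L)) :
    X * d⁄dX L (mk (briotBouquetCoeff f)) = mvcomp f (mk (briotBouquetCoeff f)) := by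
  set z := mk (briotBouquetCoeff f)
  rw [← sub_eq_zero]
  ext (_ | n)
  · simp [mvcomp, MvPowerSeries.coeff_zero_eq_constantCoeff_apply, hf0]
  set w : L⟦X⟧ := ↑(trunc (n + 1) z)
  have hz : X ∣ z := X_dvd_iff.mpr (by simp [z, briotBouquetCoeff])
  have hw : X ∣ w := X_dvd_iff.mpr <| by
    rw [← coeff_zero_eq_constantCoeff_apply, coeff_coe_trunc_of_lt n.succ_pos,
      coeff_zero_eq_constantCoeff_apply]
    exact X_dvd_iff.mp hz
  have hwn : coeff (n + 1) w = 0 := by simp [w, coeff_trunc]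
  have hsol : ((n + 1 : L) - MvPowerSeries.coeff (Finsupp.single 1 1) f) * coeff (n + 1) z =
      coeff (n + 1) (mvcomp f w) := by
    rw [coeff_mk, briotBouquetCoeff_succ, mul_inv_cancel_left₀ (succ_sub_coeff_ne_zero hc n)]
  have step := coeff_succ_briotBouquet_sub f hz hw (X_pow_dvd_sub_trunc z (n + 1))
  simp only [map_sub, map_zero, coeff_succ_X_mul_derivative, hwn] at step ⊢
  linear_combination step + hsol

theorem eq_of_X_mul_derivative_eq_mvcomp
    (hc : ∀ m : ℕ, 0 < m → MvPowerSeries.coeff (Finsupp.single 1 1) f ≠ (m : L))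
    {y z : L⟦X⟧} (hy : X ∣ y) (hz : X ∣ z)
    (hy' : X * d⁄dX L y = mvcomp f y) (hz' : X * d⁄dX L z = mvcomp f z) : y = z := by
  have hdvd : ∀ n : ℕ, X ^ (n + 1) ∣ y - z := by
    intro n
    induction n with
    | zero => simpa using dvd_sub hy hz
    | succ n ih =>
      refine X_pow_dvd_iff.mpr fun m hm => ?_
      obtain hm | rfl := Nat.lt_succ_iff_lt_or_eq.mp hm
      · exact X_pow_dvd_iff.mp ih m hm
      · have step := coeff_succ_briotBouquet_sub f hy hz ih
        simp only [hy', hz', sub_self, map_zero] at step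
        rw [map_sub]
        exact (mul_eq_zero.mp step.symm).resolve_left (succ_sub_coeff_ne_zero hc n)
  ext n
  exact coeff_eq_of_X_pow_dvd_sub (hdvd n) n.lt_succ_self

theorem existsUnique_briotBouquet (hf0 : MvPowerSeries.constantCoeff f = 0)
    (hc : ∀ m : ℕ, 0 < m → MvPowerSeries.coeff (Finsupp.single 1 1) f ≠ (m : L)) :
    ∃! z : L⟦X⟧, constantCoeff z = 0 ∧ X * d⁄dX L z = mvcomp f z := by
  refine ⟨mk (briotBouquetCoeff f), ⟨by simp [briotBouquetCoeff],
    X_mul_derivative_briotBouquet hf0 hc⟩, fun y ⟨hy, hy'⟩ => ?_⟩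
  exact eq_of_X_mul_derivative_eq_mvcomp hc (X_dvd_iff.mpr hy)
    (X_dvd_iff.mpr (by simp [briotBouquetCoeff])) hy' (X_mul_derivative_briotBouquet hf0 hc)

end BriotBouquet

theorem briot_bouquet_unique_prolongation_general
    (F : MvPolynomial (Fin 2) L) (s : Polynomial L)
    (f : MvPowerSeries (Fin 2) L)
    (hf0 : MvPowerSeries.constantCoeff f = 0)
    (hc : ∀ m : ℕ, 0 < m →
      MvPowerSeries.coeff (Finsupp.single 1 1) f ≠ (m : L))
    (hequiv : ∀ z : PowerSeries L, PowerSeries.constantCoeff z = 0 →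
      (MvPolynomial.aeval
          ![(s : PowerSeries L) + z,
            ((Polynomial.derivative s : Polynomial L) : PowerSeries L) + z.derivativeFun]
          F = 0 ↔
        PowerSeries.X * z.derivativeFun = mvcomp f z)) :
    ∃! y : PowerSeries L,
      PowerSeries.constantCoeff (y - (s : PowerSeries L)) = 0 ∧
      MvPolynomial.aeval ![y, y.derivativeFun] F = 0 := by
  obtain ⟨z, ⟨hz0, hz⟩, hz_unique⟩ := existsUnique_briotBouquet hf0 hc
  have hequiv' : ∀ u : L⟦X⟧, constantCoeff u = 0 →
      (MvPolynomial.aeval ![(s : L⟦X⟧) + u, d⁄dX L ((s : L⟦X⟧) + u)] F = 0 ↔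
        X * d⁄dX L u = mvcomp f u) := by
    intro u hu
    rw [map_add, derivative_coe]
    exact hequiv u hu
  refine ⟨s + z, ⟨by simpa using hz0, (hequiv' z hz0).mpr hz⟩, fun y ⟨hy0, hy⟩ => ?_⟩
  obtain ⟨u, rfl⟩ : ∃ u, y = s + u := ⟨y - s, (add_sub_cancel _ _).symm⟩
  rw [add_sub_cancel_left] at hy0
  rw [hz_unique u ⟨hy0, (hequiv' u hy0).mp hy⟩]

/-- **Unique prolongation of truncations via Briot–Bouquet equations.**
Let `F ∈ K̄[y,p]` (variables `0 = y`, `1 = p`) over an algebraically closed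
field `K̄` of characteristic zero, and let `s(x) ∈ K̄[x]` be a polynomial
truncation of a solution such that the change of variables `z = y − s(x)`
transforms `F(y, y') = 0` into an equation of Briot–Bouquet type
`x·z' = f(x, z)`, where `f` is a formal power series in two variables with
`f(0,0) = 0` and `c = ∂f/∂z(0,0)` not a positive integer.  (The transformation
is recorded by the hypothesis `hequiv`.)  Then the extension of `s(x)` to a
full power series solution `y(x)` of `F(y, y') = 0` exists and is unique. -/
theorem briot_bouquet_unique_prolongation
    [CharZero L] [IsAlgClosed L]
    (F : MvPolynomial (Fin 2) L) (s : Polynomial L)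
    (f : MvPowerSeries (Fin 2) L)
    (hf0 : MvPowerSeries.constantCoeff f = 0)
    (hc : ∀ m : ℕ, 0 < m →
      MvPowerSeries.coeff (Finsupp.single 1 1) f ≠ (m : L))
    (hequiv : ∀ z : PowerSeries L, PowerSeries.constantCoeff z = 0 →
      (MvPolynomial.aeval
          ![(s : PowerSeries L) + z,
            ((Polynomial.derivative s : Polynomial L) : PowerSeries L) + z.derivativeFun]
          F = 0 ↔
        PowerSeries.X * z.derivativeFun = mvcomp f z)) :
    ∃! y : PowerSeries L,
      PowerSeries.constantCoeff (y - (s : PowerSeries L)) = 0 ∧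
      MvPolynomial.aeval ![y, y.derivativeFun] F = 0 :=
  briot_bouquet_unique_prolongation_general F s f hf0 hc hequiv
end
end
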